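/- Let p > 1 and Q ≥ 1. For every M > 0 there exists x₀ > 1 such that for every x ≥ x₀ the following holds: every nondecreasing continuous Q-quasiminimizer U on the interval (0,x) (with respect to unweighted ℝ and exponent p) satisfying U(t) = t for all 0 < t ≤ 1 has lim_{t→x⁻} U(t) ≥ M (with the convention that the conclusion holds trivially if U is unbounded above). In other words, the infimum f_Q(x) of lim_{t→x⁻} U(t) over all such extensions U tends to ∞ as x → ∞. -/

import Mathlib

open MeasureTheory Set

/-- `u` is locally absolutely continuous on the open set `U ⊆ ℝ` with derivative `du`:
on every compact subinterval of `U`, `du` is integrable and the fundamental theorem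
of calculus holds for `u` with integrand `du`. -/
def LocACWith (U : Set ℝ) (u du : ℝ → ℝ) : Prop :=
  ∀ a b : ℝ, a ≤ b → Set.Icc a b ⊆ U →
    MeasureTheory.IntegrableOn du (Set.Icc a b) ∧
      ∀ x ∈ Set.Icc a b, u x = u a + ∫ t in a..x, du t

/-- `du ∈ L^p_loc(U)`: `|du|^p` is integrable on every compact subinterval of `U`. -/
def LpLocOn (p : ℝ) (U : Set ℝ) (du : ℝ → ℝ) : Prop :=
  ∀ a b : ℝ, a ≤ b → Set.Icc a b ⊆ U →
    MeasureTheory.IntegrableOn (fun t => |du t| ^ p) (Set.Icc a b)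

/-- `u` is a `Q`-quasiminimizer on the open set `U ⊆ ℝ` (unweighted, exponent `p`),
witnessed by the derivative `du`: `u` is locally absolutely continuous with derivative
`du ∈ L^p_loc(U)`, and for every open `G` with compact closure contained in `U` and
every competitor `v` (locally absolutely continuous with derivative `dv ∈ L^p_loc(U)`)
agreeing with `u` on `U \ G`, one has `∫_G |u'|^p ≤ Q ∫_G |v'|^p`. -/
def IsQuasiminimizerWith (p Q : ℝ) (U : Set ℝ) (u du : ℝ → ℝ) : Prop :=
  Measurable du ∧ LocACWith U u du ∧ LpLocOn p U du ∧
    ∀ G : Set ℝ, IsOpen G → IsCompact (closure G) → closure G ⊆ U →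
      ∀ v dv : ℝ → ℝ, Measurable dv → LocACWith U v dv → LpLocOn p U dv →
        (∀ x ∈ U \ G, v x = u x) →
        ∫⁻ x in G, ENNReal.ofReal (|du x| ^ p) ≤
          ENNReal.ofReal Q * ∫⁻ x in G, ENNReal.ofReal (|dv x| ^ p)

/-- `u` is a `Q`-quasiminimizer on `U` (unweighted, exponent `p`). -/
def IsQuasiminimizerOn (p Q : ℝ) (U : Set ℝ) (u : ℝ → ℝ) : Prop :=
  ∃ du : ℝ → ℝ, IsQuasiminimizerWith p Q U u du

/-- `u` is `Q`-quasiharmonic on `U`: a continuous `Q`-quasiminimizer. -/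
def IsQuasiharmonicOn (p Q : ℝ) (U : Set ℝ) (u : ℝ → ℝ) : Prop :=
  ContinuousOn u U ∧ IsQuasiminimizerOn p Q U u

/-- `u` is bounded on `S`. -/
def BddOnSet (u : ℝ → ℝ) (S : Set ℝ) : Prop := ∃ M : ℝ, ∀ x ∈ S, |u x| ≤ M

/-!
Compare `U` on `G = (1/2, x - 1/2)` with the competitor that is affine on `[1/2, x - 1/2]` and
equal to `U` elsewhere. Since `U` has slope `1` on `[1/2, 1]`, Bernoulli's inequality
`|y|^p ≥ 1 + p (y - 1)` bounds the energy of `U` on `G` below by `1/2`. If `lim_{t→x⁻} U(t) < M`,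
the competitor has slope below `M / (x - 1)` and hence energy below `M^p (x - 1)^{1-p}`, so
quasiminimality gives `1/2 ≤ Q M^p (x - 1)^{1-p}`, which fails for large `x` because `p > 1`.
-/

open Filter Topology

section

variable {p Q : ℝ} {U : Set ℝ} {u du w dw : ℝ → ℝ}

theorem Ioc_inter_Ioc_eq_Ioc_projIcc (s t : ℝ) {α β : ℝ} (hαβ : α ≤ β) :
    Ioc s t ∩ Ioc α β = Ioc (projIcc α β hαβ s : ℝ) (projIcc α β hαβ t) := by
  rw [Ioc_inter_Ioc, coe_projIcc, coe_projIcc]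
  ext r
  simp only [mem_Ioc]
  grind

theorem locACWith_affine (U : Set ℝ) (a c t₀ : ℝ) :
    LocACWith U (fun t => a + c * (t - t₀)) fun _ => c := by
  refine fun a b _ _ => ⟨integrableOn_const measure_Icc_lt_top.ne, fun x _ => ?_⟩
  simp only [intervalIntegral.integral_const, smul_eq_mul]
  ring

namespace LocACWith

theorem intervalIntegrable (hu : LocACWith U u du) {a b : ℝ} (hab : a ≤ b) (hsub : Icc a b ⊆ U) :
    IntervalIntegrable du volume a b :=
  (intervalIntegrable_iff_integrableOn_Icc_of_le hab).2 (hu a b hab hsub).1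

theorem add (hu : LocACWith U u du) (hw : LocACWith U w dw) :
    LocACWith U (fun t => u t + w t) (fun t => du t + dw t) := by
  intro a b hab hsub
  refine ⟨(hu a b hab hsub).1.add (hw a b hab hsub).1, fun x hx => ?_⟩
  have hsub' := (Icc_subset_Icc_right hx.2).trans hsub
  dsimp only
  rw [intervalIntegral.integral_add (hu.intervalIntegrable hx.1 hsub')
    (hw.intervalIntegrable hx.1 hsub'), (hu a b hab hsub).2 x hx, (hw a b hab hsub).2 x hx]
  ring

theorem sub (hu : LocACWith U u du) (hw : LocACWith U w dw) :
    LocACWith U (fun t => u t - w t) (fun t => du t - dw t) := by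
  intro a b hab hsub
  refine ⟨(hu a b hab hsub).1.sub (hw a b hab hsub).1, fun x hx => ?_⟩
  have hsub' := (Icc_subset_Icc_right hx.2).trans hsub
  dsimp only
  rw [intervalIntegral.integral_sub (hu.intervalIntegrable hx.1 hsub')
    (hw.intervalIntegrable hx.1 hsub'), (hu a b hab hsub).2 x hx, (hw a b hab hsub).2 x hx]
  ring

theorem comp_projIcc (hu : LocACWith U u du) {α β : ℝ} (hαβ : α ≤ β) (hsub : Icc α β ⊆ U) :
    LocACWith U (fun t => u (projIcc α β hαβ t)) ((Ioc α β).indicator du) := by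
  intro s t _ _
  refine ⟨(integrable_indicator_iff measurableSet_Ioc).2
    ((hu α β hαβ hsub).1.mono_set Ioc_subset_Icc_self).restrict, fun y hy => ?_⟩
  have hπ : (projIcc α β hαβ s : ℝ) ≤ projIcc α β hαβ y := monotone_projIcc hαβ hy.1
  have hsub' : Icc (projIcc α β hαβ s : ℝ) (projIcc α β hαβ y) ⊆ U :=
    (Icc_subset_Icc (projIcc α β hαβ s).2.1 (projIcc α β hαβ y).2.2).trans hsub
  dsimp only
  rw [(hu _ _ hπ hsub').2 _ ⟨hπ, le_rfl⟩, intervalIntegral.integral_of_le hy.1,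
    intervalIntegral.integral_of_le hπ, setIntegral_indicator measurableSet_Ioc,
    Ioc_inter_Ioc_eq_Ioc_projIcc]

end LocACWith

theorem LpLocOn.piecewise_const (hdu : LpLocOn p U du) {s : Set ℝ} [DecidablePred (· ∈ s)]
    (hs : MeasurableSet s) (c : ℝ) : LpLocOn p U (s.piecewise (fun _ => c) du) := by
  intro a b hab hsub
  have hpw : (fun t => |s.piecewise (fun _ => c) du t| ^ p) =
      s.piecewise (fun _ => |c| ^ p) fun t => |du t| ^ p :=
    funext fun t => by by_cases ht : t ∈ s <;> simp [ht]
  rw [hpw]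
  exact Integrable.piecewise hs (integrable_const _).integrableOn
    (hdu a b hab hsub).integrableOn

/-- Equal to `u` off `[α, β]` and to the chord of `u` on `[α, β]`. Written through the clamp
`projIcc`, it is a sum of functions already known to be locally absolutely continuous. -/
noncomputable def chordReplace (u : ℝ → ℝ) {α β : ℝ} (hαβ : α ≤ β) (t : ℝ) : ℝ :=
  u t - u (projIcc α β hαβ t) + (u α + slope u α β * (projIcc α β hαβ t - α))

theorem chordReplace_of_notMem_Ioo (u : ℝ → ℝ) {α β t : ℝ} (hαβ : α ≤ β) (ht : t ∉ Ioo α β) :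
    chordReplace u hαβ t = u t := by
  rcases le_or_gt t α with htα | hαt
  · simp [chordReplace, projIcc_of_le_left hαβ htα]
  · have hβt : β ≤ t := not_lt.1 fun htβ => ht ⟨hαt, htβ⟩
    have hchord : (β - α) * slope u α β = u β - u α := sub_smul_slope u α β
    simp only [chordReplace, projIcc_of_right_le hαβ hβt]
    linear_combination hchord

theorem LocACWith.chordReplace (hu : LocACWith U u du) {α β : ℝ} (hαβ : α ≤ β)
    (hsub : Icc α β ⊆ U) :
    LocACWith U (chordReplace u hαβ) ((Ioc α β).piecewise (fun _ => slope u α β) du) := by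
  have hdv : (Ioc α β).piecewise (fun _ => slope u α β) du = fun t =>
      du t - (Ioc α β).indicator du t + (Ioc α β).indicator (fun _ => slope u α β) t := by
    ext t
    by_cases ht : t ∈ Ioc α β <;> simp [ht]
  rw [hdv]
  exact (hu.sub (hu.comp_projIcc hαβ hsub)).add
    ((locACWith_affine U (u α) (slope u α β) α).comp_projIcc hαβ hsub)

theorem IsQuasiminimizerWith.lintegral_le_chord (hq : IsQuasiminimizerWith p Q U u du)
    {α β : ℝ} (hαβ : α < β) (hsub : Icc α β ⊆ U) :
    ∫⁻ t in Ioo α β, ENNReal.ofReal (|du t| ^ p) ≤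
      ENNReal.ofReal Q * ENNReal.ofReal (|slope u α β| ^ p * (β - α)) := by
  obtain ⟨hm, hac, hLp, hmin⟩ := hq
  have hclosure : closure (Ioo α β) = Icc α β := closure_Ioo hαβ.ne
  calc _ ≤ ENNReal.ofReal Q * ∫⁻ t in Ioo α β,
        ENNReal.ofReal (|(Ioc α β).piecewise (fun _ => slope u α β) du t| ^ p) :=
      hmin _ isOpen_Ioo (hclosure ▸ isCompact_Icc) (hclosure ▸ hsub) _ _
        (measurable_const.piecewise measurableSet_Ioc hm) (hac.chordReplace hαβ.le hsub)
        (hLp.piecewise_const measurableSet_Ioc _)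
        fun t ht => chordReplace_of_notMem_Ioo u hαβ.le ht.2
    _ = _ := by
      rw [setLIntegral_congr_fun measurableSet_Ioo fun t ht => by
          rw [piecewise_eq_of_mem _ _ _ (Ioo_subset_Ioc_self ht)],
        setLIntegral_const, Real.volume_Ioo, ← ENNReal.ofReal_mul (by positivity)]

theorem one_add_mul_sub_one_le_abs_rpow (hp : 1 ≤ p) (y : ℝ) : 1 + p * (y - 1) ≤ |y| ^ p :=
  calc 1 + p * (y - 1) ≤ 1 + p * (|y| - 1) := by gcongr; exact le_abs_self y
    _ ≤ (1 + (|y| - 1)) ^ p := one_add_mul_self_le_rpow_one_add (by linarith [abs_nonneg y]) hp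
    _ = |y| ^ p := by rw [add_sub_cancel]

theorem LocACWith.ofReal_le_lintegral_rpow (hu : LocACWith U u du) (hdu : LpLocOn p U du)
    (hp : 1 ≤ p) {a b : ℝ} (hab : a ≤ b) (hsub : Icc a b ⊆ U) (hub : u b - u a = b - a) :
    ENNReal.ofReal (b - a) ≤ ∫⁻ t in Ioc a b, ENNReal.ofReal (|du t| ^ p) := by
  have hint : IntegrableOn (fun t => |du t| ^ p) (Ioc a b) :=
    (hdu a b hab hsub).mono_set Ioc_subset_Icc_self
  have hint1 : IntegrableOn du (Ioc a b) := (hu a b hab hsub).1.mono_set Ioc_subset_Icc_self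
  have hint2 : IntegrableOn (fun t => p * (du t - 1)) (Ioc a b) :=
    (hint1.sub (integrable_const 1)).const_mul p
  have hmean : ∫ t in Ioc a b, du t = b - a := by
    rw [← intervalIntegral.integral_of_le hab]
    linarith [(hu a b hab hsub).2 b ⟨hab, le_rfl⟩]
  rw [← ofReal_integral_eq_lintegral_ofReal hint (ae_of_all _ fun t => by positivity)]
  gcongr
  calc b - a = ∫ t in Ioc a b, (1 + p * (du t - 1)) := by
        rw [integral_add (integrable_const 1) hint2, integral_const_mul,
          integral_sub hint1 (integrable_const 1), hmean]
        simp [hab]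
    _ ≤ ∫ t in Ioc a b, |du t| ^ p :=
      integral_mono ((integrable_const 1).add hint2) hint fun t =>
        one_add_mul_sub_one_le_abs_rpow hp (du t)

theorem IsQuasiminimizerWith.ofReal_le_mul_chord (hq : IsQuasiminimizerWith p Q U u du)
    (hp : 1 ≤ p) {a b β : ℝ} (hab : a ≤ b) (hbβ : b < β) (hsub : Icc a β ⊆ U)
    (hub : u b - u a = b - a) :
    ENNReal.ofReal (b - a) ≤ ENNReal.ofReal Q * ENNReal.ofReal (|slope u a β| ^ p * (β - a)) :=
  calc ENNReal.ofReal (b - a) ≤ ∫⁻ t in Ioc a b, ENNReal.ofReal (|du t| ^ p) :=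
        hq.2.1.ofReal_le_lintegral_rpow hq.2.2.1 hp hab
          ((Icc_subset_Icc_right hbβ.le).trans hsub) hub
    _ ≤ ∫⁻ t in Ioo a β, ENNReal.ofReal (|du t| ^ p) :=
        lintegral_mono_set (Ioc_subset_Ioo_right hbβ)
    _ ≤ _ := hq.lintegral_le_chord (hab.trans_lt hbβ) hsub

end

theorem MonotoneOn.le_of_tendsto_nhdsWithin_Ioo {α β : Type*} [LinearOrder α]
    [TopologicalSpace α] [OrderTopology α] [DenselyOrdered α] [Preorder β] [TopologicalSpace β]
    [OrderClosedTopology β] {f : α → β} {a x b : α} {l : β} (hf : MonotoneOn f (Ioo a x))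
    (hb : b ∈ Ioo a x) (h : Tendsto f (𝓝[Ioo a x] x) (𝓝 l)) : f b ≤ l := by
  have := right_nhdsWithin_Ioo_neBot (hb.1.trans hb.2)
  refine ge_of_tendsto h ?_
  filter_upwards [self_mem_nhdsWithin, nhdsWithin_le_nhds (Ioi_mem_nhds hb.2)] with s hs hbs
  exact hf hb hs hbs.le

theorem MonotoneOn.abs_slope_le_of_tendsto {f : ℝ → ℝ} {a x b c l : ℝ}
    (hf : MonotoneOn f (Ioo a x)) (hb : b ∈ Ioo a x) (hc : c ∈ Ioo a x) (hbc : b < c)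
    (hfb : 0 ≤ f b) (h : Tendsto f (𝓝[Ioo a x] x) (𝓝 l)) : |slope f b c| ≤ l / (c - b) := by
  have hfc := hf hb hc hbc.le
  rw [slope_def_field, abs_of_nonneg (div_nonneg (by linarith) (by linarith))]
  exact div_le_div_of_nonneg_right (by linarith [hf.le_of_tendsto_nhdsWithin_Ioo hc h])
    (by linarith)

theorem tendsto_const_mul_div_rpow_mul_atTop {p : ℝ} (hp : 1 < p) {M : ℝ} (hM : 0 ≤ M) (C : ℝ) :
    Tendsto (fun L : ℝ => C * ((M / L) ^ p * L)) atTop (𝓝 0) := by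
  have h := (tendsto_rpow_neg_atTop (sub_pos.2 hp)).const_mul (C * M ^ p)
  rw [mul_zero] at h
  refine h.congr' ?_
  filter_upwards [eventually_gt_atTop 0] with L hL
  rw [Real.div_rpow hM hL.le, Real.rpow_neg hL.le, Real.rpow_sub_one hL.ne']
  field_simp

theorem quasiminimizer_extension_tendsto_infty_general
    (p Q : ℝ) (hp : 1 < p) :
    ∀ M : ℝ, 0 < M → ∃ x₀ : ℝ, 1 < x₀ ∧ ∀ x : ℝ, x₀ ≤ x →
      ∀ U : ℝ → ℝ, MonotoneOn U (Set.Ioo 0 x) →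
        ContinuousOn U (Set.Ioo 0 x) →
        IsQuasiminimizerOn p Q (Set.Ioo 0 x) U →
        (∀ t : ℝ, 0 < t → t ≤ 1 → U t = t) →
        ∀ a : ℝ, Filter.Tendsto U (nhdsWithin x (Set.Ioo 0 x)) (nhds a) → M ≤ a := by
  intro M hM
  obtain ⟨N, hN⟩ := eventually_atTop.1 <|
    (tendsto_const_mul_div_rpow_mul_atTop hp hM.le Q).eventually (gt_mem_nhds one_half_pos)
  refine ⟨max N 1 + 1, by linarith [le_max_right N 1], ?_⟩
  intro x hx U hmono _ ⟨du, hq⟩ hid a hlim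
  by_contra! haM
  have hL : 1 ≤ x - 1 := by linarith [le_max_right N 1]
  have hsub : Icc (1 / 2) (x - 1 / 2) ⊆ Ioo 0 x := Icc_subset_Ioo (by norm_num) (by linarith)
  have hU : U (1 / 2) = 1 / 2 := hid _ one_half_pos (by norm_num)
  have hlen : x - 1 / 2 - 1 / 2 = x - 1 := by ring
  have hslope : |slope U (1 / 2) (x - 1 / 2)| ≤ M / (x - 1) := by
    rw [← hlen]
    exact (hmono.abs_slope_le_of_tendsto (hsub ⟨le_rfl, by linarith⟩) (hsub ⟨by linarith, le_rfl⟩)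
      (by linarith) (by norm_num [hU]) hlim).trans (div_le_div_of_nonneg_right haM.le (by linarith))
  have henergy := hq.ofReal_le_mul_chord hp.le (b := 1) (by norm_num) (by linarith) hsub
    (by rw [hU, hid 1 one_pos le_rfl])
  rw [hlen] at henergy
  refine lt_irrefl (ENNReal.ofReal (1 - 1 / 2)) ?_
  calc ENNReal.ofReal (1 - 1 / 2)
      ≤ ENNReal.ofReal Q * ENNReal.ofReal ((M / (x - 1)) ^ p * (x - 1)) :=
        henergy.trans (by gcongr)
    _ = ENNReal.ofReal (Q * ((M / (x - 1)) ^ p * (x - 1))) :=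
        (ENNReal.ofReal_mul' (mul_nonneg (by positivity) (by linarith))).symm
    _ < ENNReal.ofReal (1 - 1 / 2) := by
        rw [ENNReal.ofReal_lt_ofReal_iff (by norm_num)]
        linarith [hN (x - 1) (by linarith [le_max_left N 1])]

/-- **`f_Q(x) → ∞` as `x → ∞`.** For every `M > 0` there is `x₀ > 1` such that for all
`x ≥ x₀`, every nondecreasing continuous `Q`-quasiminimizer `U` on `(0,x)` with
`U(t) = t` for `0 < t ≤ 1` has `lim_{t→x⁻} U(t) ≥ M` (trivially, if the limit does
not exist, i.e. `U` is unbounded above, the conclusion holds). -/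
theorem quasiminimizer_extension_tendsto_infty
    (p Q : ℝ) (hp : 1 < p) (hQ : 1 ≤ Q) :
    ∀ M : ℝ, 0 < M → ∃ x₀ : ℝ, 1 < x₀ ∧ ∀ x : ℝ, x₀ ≤ x →
      ∀ U : ℝ → ℝ, MonotoneOn U (Set.Ioo 0 x) →
        ContinuousOn U (Set.Ioo 0 x) →
        IsQuasiminimizerOn p Q (Set.Ioo 0 x) U →
        (∀ t : ℝ, 0 < t → t ≤ 1 → U t = t) →
        ∀ a : ℝ, Filter.Tendsto U (nhdsWithin x (Set.Ioo 0 x)) (nhds a) → M ≤ a :=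
  quasiminimizer_extension_tendsto_infty_general p Q hp
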